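/- Let p be a prime with p ≡ 3 (mod 8). Then the elliptic curve E^p: y² = x³ − p²x over ℚ has Mordell–Weil rank 0, and E^p(ℚ) = E^p(ℚ)[2] ≅ ℤ/2ℤ × ℤ/2ℤ, consisting of O, (0,0), (p,0), (−p,0). -/

import Mathlib

/-!
A rational point with `y ≠ 0` on `y² = x³ − p²x` gives a right triangle with rational legs
`(x² − p²)/y`, `2px/y` and area `p`. Scaling and dividing by the gcd gives a primitive integer
triangle whose area is `p` times a square; in Euclid's parametrization this reads
`n m (m − n) (m + n) = p q²` with pairwise coprime factors, so one factor is `p` times a square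
and the other three are squares. If it is `m` or `m + n`, this is impossible modulo 8; if it is
`m − n`, then `2` is a square modulo `p`, impossible for `p ≡ 3 (mod 8)`; if it is `n`, then the
square roots `γ`, `δ` of `m − n`, `m + n` give a new primitive triangle with legs
`(δ ± γ)/2`, area `p` times a square and hypotenuse `√m < m² + n²`: Fermat's descent.
Hence `y = 0`, and the only points are `O` and the three points of order two.
-/

theorem sq_mod_eight (n : ℕ) : n ^ 2 % 8 = 0 ∨ n ^ 2 % 8 = 1 ∨ n ^ 2 % 8 = 4 := by
  rw [Nat.pow_mod]
  have : n % 8 < 8 := Nat.mod_lt _ (by norm_num)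
  interval_cases n % 8 <;> simp

theorem mul_sq_mod_eight {p : ℕ} (hp : p % 8 = 3) (n : ℕ) :
    p * n ^ 2 % 8 = 0 ∨ p * n ^ 2 % 8 = 3 ∨ p * n ^ 2 % 8 = 4 := by
  rw [Nat.mul_mod, hp]
  rcases sq_mod_eight n with h | h | h <;> simp [h]

theorem sq_add_sq_ne_two_mul_of_odd {p : ℕ} (hp : p % 8 = 3) {a b c : ℕ} (ha : Odd a)
    (hb : Odd b) : a ^ 2 + b ^ 2 ≠ 2 * (p * c ^ 2) := by
  have := sq_mod_eight a; have := sq_mod_eight b; have := mul_sq_mod_eight hp c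
  have := Nat.odd_iff.mp (ha.pow (n := 2)); have := Nat.odd_iff.mp (hb.pow (n := 2))
  omega

theorem sq_add_sq_ne_mul_of_odd {p : ℕ} (hp : p % 8 = 3) {a b c : ℕ}
    (hab : Odd (a ^ 2 + b ^ 2)) : a ^ 2 + b ^ 2 ≠ p * c ^ 2 := by
  have := sq_mod_eight a; have := sq_mod_eight b; have := mul_sq_mod_eight hp c
  have := Nat.odd_iff.mp hab
  omega

theorem eq_zero_of_sq_eq_two_mul_sq {F : Type*} [Field F] (h2 : ¬IsSquare (2 : F)) {x y : F}
    (h : x ^ 2 = 2 * y ^ 2) : y = 0 := by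
  by_contra hy
  exact h2 ⟨x / y, by field_simp; linear_combination -h⟩

theorem Nat.Prime.dvd_of_sq_eq_two_mul_sq_add {p : ℕ} (hp : p.Prime) (hp3 : p % 8 = 3)
    {a b c : ℕ} (h : a ^ 2 = 2 * b ^ 2 + p * c ^ 2) : p ∣ b := by
  have := Fact.mk hp
  rw [← ZMod.natCast_eq_zero_iff]
  refine eq_zero_of_sq_eq_two_mul_sq (fun h2 => ?_) (x := (a : ZMod p)) ?_
  · have := (ZMod.exists_sq_eq_two_iff (by omega)).mp h2
    omega
  · simpa using congrArg (Nat.cast : ℕ → ZMod p) h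

theorem Nat.exists_sq_of_coprime_of_mul_eq_sq {a b c : ℕ} (hab : a.Coprime b)
    (h : a * b = c ^ 2) : (∃ d, a = d ^ 2) ∧ ∃ e, b = e ^ 2 :=
  ⟨exists_eq_pow_of_mul_eq_pow (Nat.isUnit_iff.mpr hab) h,
    exists_eq_pow_of_mul_eq_pow (Nat.isUnit_iff.mpr hab.symm) (mul_comm a b ▸ h)⟩

theorem Nat.exists_eq_prime_mul_sq_of_mul_eq {p q x y z w : ℕ} (hp : p.Prime)
    (hxy : x.Coprime y) (hxz : x.Coprime z) (hxw : x.Coprime w)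
    (hyz : y.Coprime z) (hyw : y.Coprime w) (hzw : z.Coprime w)
    (h : x * y * z * w = p * q ^ 2) (hpx : p ∣ x) :
    ∃ α β γ δ, x = p * α ^ 2 ∧ y = β ^ 2 ∧ z = γ ^ 2 ∧ w = δ ^ 2 := by
  obtain ⟨x, rfl⟩ := hpx
  have h' : x * (y * (z * w)) = q ^ 2 :=
    Nat.eq_of_mul_eq_mul_left hp.pos (by rw [← h]; ring)
  obtain ⟨⟨α, rfl⟩, r, hr⟩ := Nat.exists_sq_of_coprime_of_mul_eq_sq
    (hxy.mul_right (hxz.mul_right hxw)).coprime_mul_left h'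
  obtain ⟨⟨β, rfl⟩, s, hs⟩ := Nat.exists_sq_of_coprime_of_mul_eq_sq (hyz.mul_right hyw) hr
  obtain ⟨⟨γ, rfl⟩, δ, rfl⟩ := Nat.exists_sq_of_coprime_of_mul_eq_sq hzw hs
  exact ⟨α, β, γ, δ, rfl, rfl, rfl, rfl⟩

theorem Nat.dvd_of_sq_dvd_mul_sq {n g q : ℕ} (hn : Squarefree n) (h : g ^ 2 ∣ n * q ^ 2) :
    g ∣ q := by
  rcases Nat.eq_zero_or_pos (g.gcd q) with h0 | h0
  · simp [(Nat.gcd_eq_zero_iff.mp h0).2]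
  obtain ⟨d, g, q, hd, hgq, rfl, rfl⟩ := Nat.exists_coprime' h0
  have h' : g ^ 2 ∣ n * q ^ 2 := by
    refine (Nat.mul_dvd_mul_iff_right (pow_pos hd 2)).mp ?_
    simpa only [mul_pow, mul_assoc] using h
  have hg : g * g ∣ n := by rw [← sq]; exact (hgq.pow 2 2).dvd_of_dvd_mul_right h'
  rw [Nat.isUnit_iff.mp (hn g hg), one_mul]
  exact dvd_mul_left d q

theorem exists_triangle_of_sq_eq_sq_add {p : ℕ} (hp : Odd p) {γ δ α : ℕ} (hγ : Odd γ)
    (hγδ : γ.Coprime δ) (hα : α ≠ 0) (h : δ ^ 2 = γ ^ 2 + 2 * (p * α ^ 2)) :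
    ∃ u v r, u.Coprime v ∧ r ≠ 0 ∧ 2 * (u ^ 2 + v ^ 2) = γ ^ 2 + δ ^ 2 ∧
      u * v = 2 * p * r ^ 2 := by
  have hδ : Odd δ := by
    have : Odd (δ ^ 2) := h ▸ hγ.pow.add_even (even_two_mul _)
    exact Nat.Odd.of_mul_right (by rwa [sq] at this)
  have hγδ' : γ < δ := by
    have : γ ^ 2 < δ ^ 2 := by
      rw [h]; have := hp.pos; have := Nat.pos_of_ne_zero hα
      exact lt_add_of_pos_right _ (by positivity)
    exact lt_of_pow_lt_pow_left₀ 2 (Nat.zero_le _) this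
  obtain ⟨t, rfl⟩ : ∃ t, δ = γ + 2 * t := ⟨(δ - γ) / 2, by
    rcases hγ with ⟨i, rfl⟩; rcases hδ with ⟨j, rfl⟩; omega⟩
  have ht : 2 * (t * (γ + t)) = p * α ^ 2 := by
    have : 2 * (2 * (t * (γ + t))) = 2 * (p * α ^ 2) := by linarith [h]
    omega
  obtain ⟨r, rfl⟩ : 2 ∣ α := by
    have : Even (p * α ^ 2) := ht ▸ even_two_mul _
    have hα2 := (Nat.even_mul.mp this).resolve_left (Nat.not_even_iff_odd.mpr hp)
    exact (Nat.even_pow.mp hα2).1.two_dvd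
  refine ⟨γ + t, t, r, ?_, by rintro rfl; simp at hα, by ring, by linarith⟩
  rw [Nat.coprime_self_add_right] at hγδ
  exact (Nat.coprime_add_self_left.mpr (Nat.Coprime.coprime_mul_left_right hγδ))

-- Euclid's parameters `(m, n)` are `(N + K, N)`: using `K = m - n` avoids truncated subtraction.
theorem Nat.exists_params_of_sq_add_sq_eq_sq {a b c : ℕ} (h : a ^ 2 + b ^ 2 = c ^ 2)
    (hab : a.Coprime b) (ha : Odd a) (hb : 0 < b) :
    ∃ N K, 0 < N ∧ Odd K ∧ N.Coprime K ∧
      a = K * (2 * N + K) ∧ b = 2 * (N + K) * N ∧ c = (N + K) ^ 2 + N ^ 2 := by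
  have hc : 0 < c := by
    apply Nat.pos_of_ne_zero; rintro rfl; simp at h; omega
  have hPT : PythagoreanTriple (a : ℤ) b c := by
    unfold PythagoreanTriple; push_cast [← sq]; exact_mod_cast h
  obtain ⟨m, n, ham, hbn, hcmn, hmn, hpar, hm⟩ := hPT.coprime_classification'
    (by rwa [Int.gcd_natCast_natCast]) (by rcases ha with ⟨i, rfl⟩; push_cast; omega)
    (by exact_mod_cast hc)
  have hn : 0 < n := by
    have : (0 : ℤ) < 2 * m * n := hbn ▸ by exact_mod_cast hb
    nlinarith
  have hnm : n < m := by
    have : (0 : ℤ) < m ^ 2 - n ^ 2 := ham ▸ by exact_mod_cast ha.pos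
    nlinarith
  lift n to ℕ using hn.le
  obtain ⟨K, rfl⟩ : ∃ K : ℕ, m = n + K := ⟨(m - n).toNat, by omega⟩
  refine ⟨n, K, by exact_mod_cast hn, Nat.odd_iff.mpr (by omega), ?_, ?_, ?_, ?_⟩
  · exact (Nat.coprime_self_add_left.mp (by exact_mod_cast hmn)).symm
  · zify; rw [ham]; ring
  · zify; rw [hbn]
  · zify; rw [hcmn]

theorem exists_triangle_of_mul_eq_prime_mul_sq {p : ℕ} (hp : p.Prime) (hp3 : p % 8 = 3)
    {N K q : ℕ} (hN : 0 < N) (hK : Odd K) (hNK : N.Coprime K)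
    (h : N * (N + K) * K * (2 * N + K) = p * q ^ 2) :
    ∃ u v β r, u.Coprime v ∧ r ≠ 0 ∧ u ^ 2 + v ^ 2 = β ^ 2 ∧ u * v = 2 * p * r ^ 2 ∧
      β ^ 2 = N + K := by
  have hNM : N.Coprime (N + K) := Nat.coprime_self_add_right.mpr hNK
  have hNS : N.Coprime (2 * N + K) := (Nat.coprime_mul_right_add_right N K 2).mpr hNK
  have hMK : (N + K).Coprime K := Nat.coprime_add_self_left.mpr hNK
  have hMS : (N + K).Coprime (2 * N + K) := by
    rw [show 2 * N + K = N + (N + K) by ring]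
    exact Nat.coprime_add_self_right.mpr hNM.symm
  have hKS : K.Coprime (2 * N + K) :=
    Nat.coprime_add_self_right.mpr ((Nat.coprime_two_right.mpr hK).mul_right hNK.symm)
  have hS : Odd (2 * N + K) := (even_two_mul N).add_odd hK
  have hdvd : p ∣ N * (N + K) * K * (2 * N + K) := h ▸ dvd_mul_right p _
  rcases hp.dvd_mul.mp hdvd with hdvd | hpS
  rcases hp.dvd_mul.mp hdvd with hdvd | hpK
  rcases hp.dvd_mul.mp hdvd with hpN | hpM
  · obtain ⟨α, β, γ, δ, hNα, hMβ, hKγ, hSδ⟩ :=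
      Nat.exists_eq_prime_mul_sq_of_mul_eq hp hNM hNK hNS hMK hMS hKS h hpN
    have hγ : Odd γ := Nat.Odd.of_mul_right (by rwa [← sq, ← hKγ])
    have hγδ : γ.Coprime δ := by
      rw [hSδ, hKγ, Nat.coprime_pow_left_iff two_pos, Nat.coprime_pow_right_iff two_pos] at hKS
      exact hKS
    have hα : α ≠ 0 := by rintro rfl; simp at hNα; omega
    obtain ⟨u, v, r, huv, hr, hβuv, harea⟩ := exists_triangle_of_sq_eq_sq_add
      (hp.odd_of_ne_two (by omega)) hγ hγδ hα (by rw [← hSδ, ← hKγ, ← hNα]; ring)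
    exact ⟨u, v, β, r, huv, hr, by omega, harea, hMβ.symm⟩
  · obtain ⟨α, β, γ, δ, hMα, hNβ, hKγ, hSδ⟩ :=
      Nat.exists_eq_prime_mul_sq_of_mul_eq hp hNM.symm hMK hMS hNK hNS hKS (by rw [← h]; ring) hpM
    refine absurd ?_ (sq_add_sq_ne_two_mul_of_odd hp3 (a := γ) (b := δ) (c := α) ?_ ?_)
    · omega
    · exact Nat.Odd.of_mul_right (by rwa [← sq, ← hKγ])
    · exact Nat.Odd.of_mul_right (by rwa [← sq, ← hSδ])
  · obtain ⟨α, β, γ, δ, hKα, hNβ, hMγ, hSδ⟩ :=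
      Nat.exists_eq_prime_mul_sq_of_mul_eq hp hNK.symm hMK.symm hKS hNM hNS hMS
        (by rw [← h]; ring) hpK
    have hpβ : p ∣ β := hp.dvd_of_sq_eq_two_mul_sq_add hp3 (a := δ) (c := α) (by omega)
    have hpN : p ∣ N := hNβ ▸ dvd_pow hpβ two_ne_zero
    exact (hp.one_lt.ne' (Nat.eq_one_of_dvd_coprimes hNK hpN hpK)).elim
  · obtain ⟨α, β, γ, δ, hSα, hNβ, hMγ, hKδ⟩ :=
      Nat.exists_eq_prime_mul_sq_of_mul_eq hp hNS.symm hMS.symm hKS.symm hNM hNK hMK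
        (by rw [← h]; ring) hpS
    exact absurd (by omega) (sq_add_sq_ne_mul_of_odd hp3 (a := β) (b := γ) (c := α)
      (by rwa [← hNβ, ← hMγ, show N + (N + K) = 2 * N + K by ring]))

theorem Nat.mul_ne_two_mul_prime_mul_sq_of_coprime {p : ℕ} (hp : p.Prime) (hp3 : p % 8 = 3)
    {a b c q : ℕ} (hab : a.Coprime b) (hq : q ≠ 0) (h : a ^ 2 + b ^ 2 = c ^ 2) :
    a * b ≠ 2 * p * q ^ 2 := by
  induction c using Nat.strong_induction_on generalizing a b q with
  | _ c ih =>
  intro harea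
  wlog ha : Odd a generalizing a b
  · have hb : Odd b :=
      Nat.coprime_two_left.mp (hab.coprime_dvd_left (Nat.not_odd_iff_even.mp ha).two_dvd)
    exact this hab.symm (by rw [← h, add_comm]) (by rw [← harea, mul_comm]) hb
  have hb : 0 < b := Nat.pos_of_ne_zero (by rintro rfl; simp [hp.ne_zero, hq] at harea)
  obtain ⟨N, K, hN, hK, hNK, rfl, rfl, rfl⟩ := Nat.exists_params_of_sq_add_sq_eq_sq h hab ha hb
  obtain ⟨u, v, β, r, huv, hr, hβ, huvr, hβNK⟩ :=
    exists_triangle_of_mul_eq_prime_mul_sq hp hp3 hN hK hNK (by linarith)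
  refine ih β ?_ huv hr hβ huvr
  nlinarith

theorem Nat.mul_ne_two_mul_prime_mul_sq {p : ℕ} (hp : p.Prime) (hp3 : p % 8 = 3)
    {a b c q : ℕ} (hq : q ≠ 0) (h : a ^ 2 + b ^ 2 = c ^ 2) : a * b ≠ 2 * p * q ^ 2 := by
  intro harea
  have ha : 0 < a := Nat.pos_of_ne_zero (by rintro rfl; simp [hp.ne_zero, hq] at harea)
  have h2p : Squarefree (2 * p) := Nat.squarefree_mul_iff.mpr
    ⟨(Nat.coprime_primes Nat.prime_two hp).mpr (by omega), Nat.prime_two.prime.squarefree,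
      hp.prime.squarefree⟩
  obtain ⟨g, a, b, hg, hab, rfl, rfl⟩ := Nat.exists_coprime' (Nat.gcd_pos_of_pos_left b ha)
  obtain ⟨c, rfl⟩ : g ∣ c :=
    (Nat.pow_dvd_pow_iff two_ne_zero).mp ⟨a ^ 2 + b ^ 2, by rw [← h]; ring⟩
  obtain ⟨q, rfl⟩ : g ∣ q := Nat.dvd_of_sq_dvd_mul_sq h2p ⟨a * b, by rw [← harea]; ring⟩
  refine Nat.mul_ne_two_mul_prime_mul_sq_of_coprime hp hp3 hab (right_ne_zero_of_mul hq)
    (c := c) ?_ ?_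
  · exact Nat.eq_of_mul_eq_mul_left (pow_pos hg 2) (by linarith)
  · exact Nat.eq_of_mul_eq_mul_left (pow_pos hg 2) (by linarith)

def IsCongruentNumber (n : ℚ) : Prop :=
  ∃ a b c : ℚ, 0 < a ∧ 0 < b ∧ a ^ 2 + b ^ 2 = c ^ 2 ∧ a * b / 2 = n

theorem Rat.exists_int_eq_mul_of_den_dvd {r : ℚ} {n : ℕ} (h : r.den ∣ n) :
    ∃ z : ℤ, (z : ℚ) = r * n := by
  obtain ⟨k, rfl⟩ := h
  exact ⟨r.num * k, by push_cast; rw [← Rat.mul_den_eq_num]; ring⟩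

theorem not_isCongruentNumber {p : ℕ} (hp : p.Prime) (hp3 : p % 8 = 3) :
    ¬IsCongruentNumber p := by
  rintro ⟨a, b, c, -, -, h, harea⟩
  set D := a.den * b.den * c.den
  obtain ⟨A, hA⟩ := Rat.exists_int_eq_mul_of_den_dvd (n := D) (r := a)
    ⟨b.den * c.den, by ring⟩
  obtain ⟨B, hB⟩ := Rat.exists_int_eq_mul_of_den_dvd (n := D) (r := b)
    ⟨a.den * c.den, by ring⟩
  obtain ⟨C, hC⟩ := Rat.exists_int_eq_mul_of_den_dvd (n := D) (r := c)
    ⟨a.den * b.den, by ring⟩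
  have hD0 : D ≠ 0 := by positivity
  refine Nat.mul_ne_two_mul_prime_mul_sq hp hp3 (a := A.natAbs) (b := B.natAbs) (c := C.natAbs)
    hD0 ?_ ?_
  · zify
    simp only [sq_abs]
    exact_mod_cast (show (A : ℚ) ^ 2 + B ^ 2 = C ^ 2 by
      rw [hA, hB, hC]; linear_combination (D : ℚ) ^ 2 * h)
  · zify
    have hAB : A * B = 2 * p * D ^ 2 := by
      exact_mod_cast (show (A : ℚ) * B = 2 * p * D ^ 2 by
        rw [hA, hB]; linear_combination (2 * (D : ℚ) ^ 2) * harea)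
    rw [← abs_mul, hAB, abs_of_nonneg (by positivity)]

theorem isCongruentNumber_of_sq_eq_cube_sub {n x y : ℚ} (hn : 0 < n) (hy : y ≠ 0)
    (h : y ^ 2 = x ^ 3 - n ^ 2 * x) : IsCongruentNumber n := by
  have harea : (x ^ 2 - n ^ 2) / y * (2 * n * x / y) = 2 * n := by
    field_simp
    linear_combination -h
  have hr : (x ^ 2 - n ^ 2) / y ≠ 0 ∧ 2 * n * x / y ≠ 0 := by
    rw [← mul_ne_zero_iff, harea]; positivity
  refine ⟨|(x ^ 2 - n ^ 2) / y|, |2 * n * x / y|, (x ^ 2 + n ^ 2) / y, abs_pos.mpr hr.1,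
    abs_pos.mpr hr.2, ?_, ?_⟩
  · simp only [sq_abs]; field_simp; ring
  · rw [← abs_mul, harea, abs_of_pos (by positivity)]; ring

theorem eq_zero_of_sq_eq_cube_sub {p : ℕ} (hp : p.Prime) (hp3 : p % 8 = 3) {x y : ℚ}
    (h : y ^ 2 = x ^ 3 - p ^ 2 * x) : y = 0 := by
  by_contra hy
  exact not_isCongruentNumber hp hp3
    (isCongruentNumber_of_sq_eq_cube_sub (by exact_mod_cast hp.pos) hy h)

/-- Nagell: for a prime `p ≡ 3 (mod 8)`, the congruent number elliptic curve
`E^p : y² = x³ − p²x` has rank `0` over `ℚ` and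
`E^p(ℚ) = E^p(ℚ)[2] ≅ ℤ/2 × ℤ/2 = {O, (0,0), (p,0), (−p,0)}`. -/
theorem stmt_16 (p : ℕ) (hp : p.Prime) (hp3 : p % 8 = 3)
    (h₁ : (⟨0, 0, 0, -(p : ℚ) ^ 2, 0⟩ :
      WeierstrassCurve ℚ).toAffine.Nonsingular 0 0)
    (h₂ : (⟨0, 0, 0, -(p : ℚ) ^ 2, 0⟩ :
      WeierstrassCurve ℚ).toAffine.Nonsingular (p : ℚ) 0)
    (h₃ : (⟨0, 0, 0, -(p : ℚ) ^ 2, 0⟩ :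
      WeierstrassCurve ℚ).toAffine.Nonsingular (-(p : ℚ)) 0) :
    (∀ Q : (⟨0, 0, 0, -(p : ℚ) ^ 2, 0⟩ : WeierstrassCurve ℚ).toAffine.Point,
      Q = 0 ∨ Q = .some _ _ h₁ ∨ Q = .some _ _ h₂ ∨ Q = .some _ _ h₃) ∧
    (∀ Q : (⟨0, 0, 0, -(p : ℚ) ^ 2, 0⟩ : WeierstrassCurve ℚ).toAffine.Point,
      Q + Q = 0) := by
  have hpoints : ∀ Q : (⟨0, 0, 0, -(p : ℚ) ^ 2, 0⟩ : WeierstrassCurve ℚ).toAffine.Point,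
      Q = 0 ∨ Q = .some _ _ h₁ ∨ Q = .some _ _ h₂ ∨ Q = .some _ _ h₃ := by
    rintro (_ | ⟨x, y, h⟩)
    · exact Or.inl rfl
    have hxy : y ^ 2 = x ^ 3 - p ^ 2 * x := by
      linear_combination (WeierstrassCurve.Affine.equation_iff ..).mp h.1
    obtain rfl := eq_zero_of_sq_eq_cube_sub hp hp3 hxy
    have hx : x * ((x - p) * (x + p)) = 0 := by linear_combination -hxy
    simp only [mul_eq_zero, sub_eq_zero, add_eq_zero_iff_eq_neg] at hx
    rcases hx with rfl | rfl | rfl <;> simp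
  refine ⟨hpoints, fun Q => ?_⟩
  rcases hpoints Q with rfl | rfl | rfl | rfl
  · rfl
  all_goals exact WeierstrassCurve.Affine.Point.add_self_of_Y_eq (by simp)
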